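/- arXiv:2101.07012 — 4 statements merged into one kernel-verified Lean document; each statement's English description precedes it below -/
import Mathlib

section
/- Let X be a finite set, let μ_E be a probability measure on X with full support, and for a function r : X → ℝ define G(r) = sup over probability measures μ on X of (Σₓ r(x) μ(x) − KL(μ, μ_E)), where KL(μ, μ_E) = Σₓ μ(x) log(μ(x)/μ_E(x)). Then G(r) = log(Σₓ exp(r(x)) μ_E(x)). -/
open Real Finset

theorem stmt_3 {X : Type*} [Fintype X] (μE : X → ℝ)
    (hpos : ∀ x, 0 < μE x) (hsum : ∑ x, μE x = 1) (r : X → ℝ) :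
    sSup {v : ℝ | ∃ μ : X → ℝ, (∀ x, 0 ≤ μ x) ∧ ∑ x, μ x = 1 ∧
        v = (∑ x, r x * μ x) - ∑ x, μ x * Real.log (μ x / μE x)}
      = Real.log (∑ x, Real.exp (r x) * μE x) := by
  have hne : (Finset.univ : Finset X).Nonempty := by
    rcases (Finset.univ : Finset X).eq_empty_or_nonempty with h | h
    · rw [h, Finset.sum_empty] at hsum; norm_num at hsum
    · exact h
  set Z := ∑ x, Real.exp (r x) * μE x with hZ
  have hZpos : 0 < Z :=
    Finset.sum_pos (fun x _ => mul_pos (Real.exp_pos _) (hpos x)) hne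
  apply IsGreatest.csSup_eq
  constructor
  · -- membership: Gibbs measure attains log Z
    refine ⟨fun x => Real.exp (r x) * μE x / Z, fun x => ?_, ?_, ?_⟩
    · exact div_nonneg (mul_nonneg (Real.exp_pos _).le (hpos x).le) hZpos.le
    · rw [← Finset.sum_div, ← hZ, div_self hZpos.ne']
    · have hlog : ∀ x, Real.log (Real.exp (r x) * μE x / Z / μE x) = r x - Real.log Z := by
        intro x
        have : Real.exp (r x) * μE x / Z / μE x = Real.exp (r x) / Z := by
          rw [div_div, div_eq_div_iff (mul_pos hZpos (hpos x)).ne' hZpos.ne']; ring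
        rw [this, Real.log_div (Real.exp_pos _).ne' hZpos.ne', Real.log_exp]
      have : (∑ x, Real.exp (r x) * μE x / Z * Real.log (Real.exp (r x) * μE x / Z / μE x))
          = (∑ x, r x * (Real.exp (r x) * μE x / Z)) - Real.log Z := by
        have h1 : ∀ x ∈ Finset.univ, Real.exp (r x) * μE x / Z * Real.log (Real.exp (r x) * μE x / Z / μE x)
            = r x * (Real.exp (r x) * μE x / Z) - Real.log Z * (Real.exp (r x) * μE x / Z) := by
          intro x _
          rw [hlog x]; ring
        rw [Finset.sum_congr rfl h1, Finset.sum_sub_distrib, ← Finset.mul_sum,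
          ← Finset.sum_div, ← hZ, div_self hZpos.ne', mul_one]
      rw [this]; ring
  · -- upper bound
    rintro v ⟨μ, hnn, hμsum, rfl⟩
    have key : ∀ x ∈ Finset.univ,
        r x * μ x - μ x * Real.log (μ x / μE x) - μ x * Real.log Z
          ≤ Real.exp (r x) * μE x / Z - μ x := by
      intro x _
      rcases eq_or_lt_of_le (hnn x) with h0 | h0
      · rw [← h0]
        simp only [mul_zero, zero_mul, sub_zero, zero_div, Real.log_zero, sub_zero]
        have : 0 ≤ Real.exp (r x) * μE x / Z := div_nonneg (mul_nonneg (Real.exp_pos _).le (hpos x).le) hZpos.le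
        linarith
      · set t := Real.exp (r x) * μE x / (μ x * Z) with ht
        have htpos : 0 < t := div_pos (mul_pos (Real.exp_pos _) (hpos x)) (mul_pos h0 hZpos)
        have hlogt : Real.log t = r x - Real.log (μ x / μE x) - Real.log Z := by
          rw [ht, Real.log_div (mul_pos (Real.exp_pos _) (hpos x)).ne' (mul_pos h0 hZpos).ne',
            Real.log_mul (Real.exp_pos _).ne' (hpos x).ne',
            Real.log_mul h0.ne' hZpos.ne', Real.log_exp,
            Real.log_div h0.ne' (hpos x).ne']
          ring
        have hle := Real.log_le_sub_one_of_pos htpos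
        have hmul := mul_le_mul_of_nonneg_left hle (hnn x)
        have hmt : μ x * t = Real.exp (r x) * μE x / Z := by
          rw [ht]; field_simp
        calc r x * μ x - μ x * Real.log (μ x / μE x) - μ x * Real.log Z
            = μ x * Real.log t := by rw [hlogt]; ring
          _ ≤ μ x * (t - 1) := hmul
          _ = Real.exp (r x) * μE x / Z - μ x := by rw [mul_sub, hmt]; ring
    have hsum_le := Finset.sum_le_sum key
    rw [Finset.sum_sub_distrib, Finset.sum_sub_distrib, Finset.sum_sub_distrib,
      ← Finset.sum_mul, hμsum, one_mul, ← Finset.sum_div, ← hZ,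
      div_self hZpos.ne'] at hsum_le
    linarith
end

section
/- Let S and A be finite sets, X = S × A, γ ∈ [0,1), μ₀ a probability vector on S, and P : X → (probability vectors on S) a transition kernel. Let K = { μ probability vector on X : for all s, Σ_a μ(s,a) = (1−γ) μ₀(s) + γ Σ_{(s',a')} P(s',a')(s) μ(s',a') }. For V : S → ℝ define r_V(s,a) = V(s) − γ Σ_{s'} P(s,a)(s') V(s'). Then for every μ ∈ K, Σ_{(s,a)} r_V(s,a) μ(s,a) = (1−γ) Σ_s V(s) μ₀(s). -/
open Finset

theorem stmt_11 {S A : Type*} [Fintype S] [Fintype A]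
    (γ : ℝ) (hγ : 0 ≤ γ) (hγ1 : γ < 1)
    (μ₀ : S → ℝ) (hμ₀ : ∀ s, 0 ≤ μ₀ s) (hμ₀sum : ∑ s, μ₀ s = 1)
    (P : S × A → S → ℝ) (hP : ∀ x s, 0 ≤ P x s) (hPsum : ∀ x, ∑ s, P x s = 1)
    (V : S → ℝ) (μ : S × A → ℝ) (hμpos : ∀ x, 0 ≤ μ x) (hμsum : ∑ x, μ x = 1)
    (hflow : ∀ s, ∑ a, μ (s, a) =
      (1 - γ) * μ₀ s + γ * ∑ x : S × A, P x s * μ x) :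
    ∑ x : S × A, (V x.1 - γ * ∑ s', P x s' * V s') * μ x
      = (1 - γ) * ∑ s, V s * μ₀ s := by
  have h1 : ∑ x : S × A, V x.1 * μ x
      = ∑ s, V s * ((1 - γ) * μ₀ s + γ * ∑ x : S × A, P x s * μ x) := by
    rw [Fintype.sum_prod_type]
    refine Finset.sum_congr rfl fun s _ => ?_
    rw [← hflow s, Finset.mul_sum]
  have h2 : ∑ x : S × A, (∑ s', P x s' * V s') * μ x
      = ∑ s', V s' * ∑ x : S × A, P x s' * μ x := by
    simp_rw [Finset.sum_mul]
    rw [Finset.sum_comm]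
    refine Finset.sum_congr rfl fun s' _ => ?_
    rw [Finset.mul_sum]
    refine Finset.sum_congr rfl fun x _ => ?_
    ring
  simp_rw [sub_mul, mul_assoc]
  rw [Finset.sum_sub_distrib, h1, ← Finset.mul_sum, h2]
  have h3 : ∑ s, V s * ((1 - γ) * μ₀ s + γ * ∑ x : S × A, P x s * μ x)
      = (∑ s, V s * ((1 - γ) * μ₀ s))
        + γ * ∑ s, V s * ∑ x : S × A, P x s * μ x := by
    simp_rw [mul_add]
    rw [Finset.sum_add_distrib, Finset.mul_sum]
    congr 1
    refine Finset.sum_congr rfl fun s _ => ?_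
    ring
  rw [h3, add_sub_cancel_right, one_mul,
    show (∑ s : S, V s * μ₀ s) - γ * ∑ s : S, V s * μ₀ s
      = (1 - γ) * ∑ s : S, V s * μ₀ s by ring,
    Finset.mul_sum]
  exact Finset.sum_congr rfl fun s _ => by ring
end

section
/- Let S, A be finite sets, X = S × A, γ ∈ [0,1), μ₀ a probability vector on S, P a transition kernel from X to S, and K the set of visitation distributions as above, and assume K is nonempty. Then for every V : S → ℝ, sup_{μ ∈ K} Σ_{(s,a)} r_V(s,a) μ(s,a) = (1−γ) Σ_s V(s) μ₀(s). -/
open Finset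

theorem stmt_12 {S A : Type*} [Fintype S] [Fintype A]
    (γ : ℝ) (hγ : 0 ≤ γ) (hγ1 : γ < 1)
    (μ₀ : S → ℝ) (hμ₀ : ∀ s, 0 ≤ μ₀ s) (hμ₀sum : ∑ s, μ₀ s = 1)
    (P : S × A → S → ℝ) (hP : ∀ x s, 0 ≤ P x s) (hPsum : ∀ x, ∑ s, P x s = 1)
    (K : Set (S × A → ℝ))
    (hK : K = {μ | (∀ x, 0 ≤ μ x) ∧ ∑ x, μ x = 1 ∧
      ∀ s, ∑ a, μ (s, a) = (1 - γ) * μ₀ s + γ * ∑ x : S × A, P x s * μ x})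
    (hKne : K.Nonempty) (V : S → ℝ) :
    sSup {v : ℝ | ∃ μ ∈ K,
        v = ∑ x : S × A, (V x.1 - γ * ∑ s', P x s' * V s') * μ x}
      = (1 - γ) * ∑ s, V s * μ₀ s := by
  have key : ∀ μ ∈ K, ∑ x : S × A, (V x.1 - γ * ∑ s', P x s' * V s') * μ x
      = (1 - γ) * ∑ s, V s * μ₀ s := by
    intro μ hμ
    rw [hK] at hμ
    obtain ⟨hpos, hsum, hmarg⟩ := hμ
    have h1 : ∑ x : S × A, V x.1 * μ x = ∑ s, V s * ∑ a, μ (s, a) := by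
      rw [Fintype.sum_prod_type]
      simp [Finset.mul_sum]
    have h2 : ∑ x : S × A, (∑ s', P x s' * V s') * μ x
        = ∑ s, V s * ∑ x : S × A, P x s * μ x := by
      have : ∑ x : S × A, (∑ s', P x s' * V s') * μ x
          = ∑ x : S × A, ∑ s', V s' * (P x s' * μ x) := by
        congr 1; ext x; rw [Finset.sum_mul]; congr 1; ext s'; ring
      rw [this, Finset.sum_comm]
      congr 1; ext s; rw [Finset.mul_sum]
    have expand : ∑ x : S × A, (V x.1 - γ * ∑ s', P x s' * V s') * μ x
        = ∑ x : S × A, V x.1 * μ x - γ * ∑ x : S × A, (∑ s', P x s' * V s') * μ x := by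
      rw [Finset.mul_sum, ← Finset.sum_sub_distrib]
      congr 1; ext x; ring
    rw [expand, h1, h2]
    have : ∑ s, V s * ∑ a, μ (s, a)
        = ∑ s, V s * ((1 - γ) * μ₀ s + γ * ∑ x : S × A, P x s * μ x) := by
      congr 1; ext s; rw [hmarg s]
    rw [this, Finset.mul_sum, ← Finset.sum_sub_distrib, Finset.mul_sum]
    congr 1; ext s; ring
  have hset : {v : ℝ | ∃ μ ∈ K,
      v = ∑ x : S × A, (V x.1 - γ * ∑ s', P x s' * V s') * μ x}
      = {(1 - γ) * ∑ s, V s * μ₀ s} := by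
    ext v
    simp only [Set.mem_setOf_eq, Set.mem_singleton_iff]
    constructor
    · rintro ⟨μ, hμ, rfl⟩; exact key μ hμ
    · rintro rfl
      obtain ⟨μ, hμ⟩ := hKne
      exact ⟨μ, hμ, (key μ hμ).symm⟩
  rw [hset, csSup_singleton]
end

section
/- Let S, A be finite sets with |A| = n, U the uniform distribution on A, and ε > 0. Define Ω on the set B_× of factorizable μ(s,a) = π(s)(a)·μ_S(s) (with μ_S a probability vector on S and each π(s) a probability vector on A) by Ω(μ) = Σ_s μ_S(s) · KL(π(s), U), and Ω = +∞ outside B_×. Then for all r, r' : S × A → ℝ, ε Ω*((r − r')/ε) = ε · max_{s ∈ S} ( Σ_a exp((r(s,a) − r'(s,a))/ε) · (1/n) − 1 ), where the conjugate is computed with the extended-measure convention of the paper, i.e., with the per-state supremum taken over all nonnegative vectors π(s) (not just probability vectors), using the generalized KL(π, U) = Σ_a [π(a) log(π(a)/U(a)) − π(a) + U(a)]. -/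
open Finset

/-!
For each state the inner problem is the Fenchel–Young inequality for `x log x`: by
`y + 1 ≤ exp y` at `y = t - log (n x)`, one has `t x - (x log (n x) - x + 1/n) ≤ (exp t - 1)/n`,
with equality at the Gibbs weight `x = exp t / n`.  Summing over actions, the per-state value is
`∑ₐ exp (h a) / n - 1`.  The outer objective is a convex combination of the per-state values,
so its supremum is attained by a Dirac mass on a state maximizing that value.
-/

section

open Real

theorem mul_sub_klTerm_le {n : ℝ} (hn : 0 < n) (t : ℝ) {x : ℝ} (hx : 0 ≤ x) :
    t * x - (x * log (n * x) - x + 1 / n) ≤ exp t * (1 / n) - 1 / n := by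
  rcases hx.eq_or_lt with rfl | hx
  · simpa using mul_nonneg (exp_pos t).le (inv_nonneg.2 hn.le)
  have hnx : 0 < n * x := mul_pos hn hx
  have : x * (t - log (n * x) + 1) ≤ exp t * (1 / n) :=
    calc x * (t - log (n * x) + 1) ≤ x * exp (t - log (n * x)) :=
          mul_le_mul_of_nonneg_left (add_one_le_exp _) hx.le
      _ = exp t * (1 / n) := by rw [exp_sub, exp_log hnx]; field_simp
  linarith

theorem mul_sub_klTerm_exp_div {n : ℝ} (hn : 0 < n) (t : ℝ) :
    t * (exp t / n) - (exp t / n * log (n * (exp t / n)) - exp t / n + 1 / n)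
      = exp t * (1 / n) - 1 / n := by
  rw [mul_div_cancel₀ _ hn.ne', log_exp]
  ring

theorem isGreatest_sum_mul_sub_sum_klTerm {A : Type*} [Fintype A] [Nonempty A] (h : A → ℝ) :
    IsGreatest ((fun p : A → ℝ => ∑ a, h a * p a
        - ∑ a, (p a * log (Fintype.card A * p a) - p a + 1 / Fintype.card A))
          '' {p | ∀ a, 0 ≤ p a})
      (∑ a, exp (h a) * (1 / Fintype.card A) - 1) := by
  have hn : (0 : ℝ) < Fintype.card A := by exact_mod_cast Fintype.card_pos
  have hcard : ∑ _a : A, (1 / Fintype.card A : ℝ) = 1 := by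
    rw [sum_const, card_univ, nsmul_eq_mul, mul_one_div_cancel hn.ne']
  have hsum : ∀ p : A → ℝ, ∑ a, h a * p a
      - ∑ a, (p a * log (Fintype.card A * p a) - p a + 1 / Fintype.card A)
        = ∑ a, (h a * p a - (p a * log (Fintype.card A * p a) - p a + 1 / Fintype.card A)) :=
    fun p => (sum_sub_distrib _ _).symm
  have htarget : ∑ a, exp (h a) * (1 / Fintype.card A) - 1
      = ∑ a, (exp (h a) * (1 / Fintype.card A) - 1 / Fintype.card A) := by
    rw [sum_sub_distrib, hcard]
  refine ⟨⟨fun a => exp (h a) / Fintype.card A, fun a => by positivity, ?_⟩, ?_⟩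
  · simp only [hsum, htarget, mul_sub_klTerm_exp_div hn]
  · rintro _ ⟨p, hp, rfl⟩
    simp only [hsum, htarget]
    exact sum_le_sum fun a _ => mul_sub_klTerm_le hn (h a) (hp a)

theorem csSup_mixture_eq_ciSup {S ι : Type*} [Fintype S] [Nonempty S]
    (J : S → ι → ℝ) (P : Set ι) (F : S → ℝ) (hF : ∀ s, IsGreatest (J s '' P) (F s)) :
    sSup {v | ∃ (μ : S → ℝ) (σ : S → ι), (∀ s, 0 ≤ μ s) ∧ ∑ s, μ s = 1 ∧ (∀ s, σ s ∈ P) ∧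
        v = ∑ s, μ s * J s (σ s)} = ⨆ s, F s := by
  classical
  obtain ⟨s₀, hs₀⟩ := Finite.exists_max F
  choose σ hσ hσF using fun s => (hF s).1
  have hiSup : ⨆ s, F s = F s₀ :=
    le_antisymm (ciSup_le hs₀) (le_ciSup (Finite.bddAbove_range F) s₀)
  rw [hiSup]
  refine IsGreatest.csSup_eq ⟨⟨Pi.single s₀ 1, σ, ?_, by simp, hσ, ?_⟩, ?_⟩
  · intro s
    by_cases hs : s = s₀ <;> simp [hs]
  · simp [Pi.single_apply, hσF]
  · rintro _ ⟨μ, σ, hμ, hμ1, hσ, rfl⟩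
    calc ∑ s, μ s * J s (σ s) ≤ ∑ s, μ s * F s₀ :=
          sum_le_sum fun s _ => mul_le_mul_of_nonneg_left
            (((hF s).2 ⟨σ s, hσ s, rfl⟩).trans (hs₀ s)) (hμ s)
      _ = F s₀ := by rw [← sum_mul, hμ1, one_mul]

end

theorem stmt_15_general {S A : Type*} [Fintype S] [Fintype A] [Nonempty S] [Nonempty A]
    (n : ℕ) (hn : n = Fintype.card A) (ε : ℝ)
    (r r' : S × A → ℝ) :
    ε * sSup {v : ℝ | ∃ (μS : S → ℝ) (π : S → A → ℝ),
        (∀ s, 0 ≤ μS s) ∧ (∑ s, μS s = 1) ∧ (∀ s a, 0 ≤ π s a) ∧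
        v = (∑ s, ∑ a, ((r (s, a) - r' (s, a)) / ε) * (π s a * μS s))
            - ∑ s, μS s *
                ∑ a, (π s a * Real.log (n * π s a) - π s a + 1 / n)}
      = ε * ⨆ s : S,
          ((∑ a, Real.exp ((r (s, a) - r' (s, a)) / ε) * (1 / n)) - 1) := by
  subst hn
  have hmix := csSup_mixture_eq_ciSup _ _ _
    fun s => isGreatest_sum_mul_sub_sum_klTerm fun a => (r (s, a) - r' (s, a)) / ε
  rw [← hmix]
  congr 3 with v
  refine exists₂_congr fun μS π => and_congr_right' <| and_congr_right' <| and_congr_right'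
    <| Eq.congr_right ?_
  simp only [mul_sub, mul_sum, sum_sub_distrib]
  congr 1
  exact sum_congr rfl fun s _ => sum_congr rfl fun a _ => by ring

/-- Lemma 2 (Soft-Actor-Critic), finite case.  The conjugate supremum is taken
over the paper's extended domain: factorizable `μ(s,a) = π s a · μS s` with `μS`
a probability vector on `S` and each `π s` merely a nonnegative vector, with the
generalized `KL(π, U) = ∑ₐ (π a log(n·π a) − π a + 1/n)`. -/
theorem stmt_15 {S A : Type*} [Fintype S] [Fintype A] [Nonempty S] [Nonempty A]
    (n : ℕ) (hn : n = Fintype.card A) (ε : ℝ) (hε : 0 < ε)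
    (r r' : S × A → ℝ) :
    ε * sSup {v : ℝ | ∃ (μS : S → ℝ) (π : S → A → ℝ),
        (∀ s, 0 ≤ μS s) ∧ (∑ s, μS s = 1) ∧ (∀ s a, 0 ≤ π s a) ∧
        v = (∑ s, ∑ a, ((r (s, a) - r' (s, a)) / ε) * (π s a * μS s))
            - ∑ s, μS s *
                ∑ a, (π s a * Real.log (n * π s a) - π s a + 1 / n)}
      = ε * ⨆ s : S,
          ((∑ a, Real.exp ((r (s, a) - r' (s, a)) / ε) * (1 / n)) - 1) :=
  stmt_15_general n hn ε r r'
end
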